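/- Let Ω ⊂ ℝⁿ be open, v ∈ C³(Ω), ξ ∈ C¹(Ω), and set Φ := ξ ∇v. Then on Ω: 2 ∇v · (DΦ)² ∇v − 2 (∇v · DΦ ∇v) div Φ = div[ ξ² ( (1/2) |∇v|² ∇(|∇v|²) − |∇v|² Δv ∇v ) ] + |∇v|² ( (Δv)² − |D²v|² ) ξ², where |D²v|² = ∑_{i,j} (∂_{ij} v)² is the squared Frobenius norm of the Hessian. -/

import Mathlib

/-!
Write `A = ∇v`, `H = D²v`, `t = ∇ξ`. The Jacobian of `Φ = ξ ∇v` is the rank-one perturbation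
`DΦ = A ⊗ t + ξ H`, so the left side is a polynomial in `ξ, t, A, H`, in which the terms
quadratic in `t` cancel. The field on the right is `ξ² |∇v|² (H A − Δv A)`; by the flat Bochner
formula `½ Δ|∇v|² = |D²v|² + ∇v · ∇Δv` the third derivatives of `v` drop out of its divergence,
and with `H` symmetric both sides become the same polynomial.
-/

/-- The partial derivative `∂_i f` of a function on `ℝⁿ`. -/
noncomputable def pd {n : ℕ} (i : Fin n) (f : (Fin n → ℝ) → ℝ) (x : Fin n → ℝ) : ℝ :=
  fderiv ℝ f x (Pi.single i 1)

/-- The gradient `∇f` of a function on `ℝⁿ`, in coordinates. -/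
noncomputable def gradv {n : ℕ} (f : (Fin n → ℝ) → ℝ) (x : Fin n → ℝ) : Fin n → ℝ :=
  fun i => pd i f x

/-- The divergence `div F = ∑ᵢ ∂_i F^i` of a vector field on `ℝⁿ`. -/
noncomputable def vdiv {n : ℕ} (F : (Fin n → ℝ) → (Fin n → ℝ)) (x : Fin n → ℝ) : ℝ :=
  ∑ i : Fin n, pd i (fun y => F y i) x

/-- The squared norm of the gradient, `|∇f|² = ∑ᵢ (∂_i f)²`. -/
noncomputable def nsq {n : ℕ} (f : (Fin n → ℝ) → ℝ) (x : Fin n → ℝ) : ℝ :=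
  ∑ i : Fin n, (pd i f x) ^ 2

/-- The Laplacian `Δf = ∑ᵢ ∂_{ii} f`. -/
noncomputable def lapp {n : ℕ} (f : (Fin n → ℝ) → ℝ) (x : Fin n → ℝ) : ℝ :=
  ∑ i : Fin n, pd i (fun y => pd i f y) x

open Filter Topology

section Calculus

variable {n : ℕ} {f g : (Fin n → ℝ) → ℝ} {x : Fin n → ℝ}

lemma pd_congr_of_eventuallyEq (i : Fin n) (h : f =ᶠ[𝓝 x] g) : pd i f x = pd i g x := by
  rw [pd, pd, h.fderiv_eq]

lemma pd_mul (i : Fin n) (hf : DifferentiableAt ℝ f x) (hg : DifferentiableAt ℝ g x) :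
    pd i (fun y => f y * g y) x = pd i f x * g x + f x * pd i g x := by
  simp only [pd, fderiv_fun_mul hf hg, add_apply, smul_apply, smul_eq_mul]
  ring

lemma pd_sub (i : Fin n) (hf : DifferentiableAt ℝ f x) (hg : DifferentiableAt ℝ g x) :
    pd i (fun y => f y - g y) x = pd i f x - pd i g x := by
  simp only [pd, fderiv_fun_sub hf hg, sub_apply]

lemma pd_const_mul (i : Fin n) (c : ℝ) (hf : DifferentiableAt ℝ f x) :
    pd i (fun y => c * f y) x = c * pd i f x := by
  simp only [pd, fderiv_const_mul hf, smul_apply, smul_eq_mul]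

lemma pd_sum {ι : Type*} (s : Finset ι) {F : ι → (Fin n → ℝ) → ℝ} (i : Fin n)
    (hF : ∀ j ∈ s, DifferentiableAt ℝ (F j) x) :
    pd i (fun y => ∑ j ∈ s, F j y) x = ∑ j ∈ s, pd i (F j) x := by
  simp only [pd, fderiv_fun_sum hF, sum_apply]

lemma pd_sq (i : Fin n) (hf : DifferentiableAt ℝ f x) :
    pd i (fun y => f y ^ 2) x = 2 * f x * pd i f x := by
  simp only [sq, pd_mul i hf hf]
  ring

lemma contDiffAt_pd {m k : WithTop ℕ∞} (hf : ContDiffAt ℝ k f x) (hk : m + 1 ≤ k) (i : Fin n) :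
    ContDiffAt ℝ m (pd i f) x :=
  (hf.fderiv_right hk).clm_apply contDiffAt_const

lemma differentiableAt_pd {k : WithTop ℕ∞} (hf : ContDiffAt ℝ k f x) (hk : 2 ≤ k) (i : Fin n) :
    DifferentiableAt ℝ (pd i f) x :=
  (contDiffAt_pd (m := 1) hf hk i).differentiableAt one_ne_zero

lemma pd_pd_comm (hf : ContDiffAt ℝ 2 f x) (i j : Fin n) : pd i (pd j f) x = pd j (pd i f) x := by
  have hdiff : DifferentiableAt ℝ (fderiv ℝ f) x :=
    (hf.fderiv_right (m := 1) le_rfl).differentiableAt one_ne_zero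
  have hsnd : ∀ a b : Fin n,
      pd a (pd b f) x = fderiv ℝ (fderiv ℝ f) x (Pi.single a 1) (Pi.single b 1) := by
    intro a b
    unfold pd
    rw [fderiv_clm_apply hdiff (differentiableAt_const _)]
    simp
  rw [hsnd, hsnd, (hf.isSymmSndFDerivAt (by simp)).eq]

lemma pd_pd_pd_comm (hf : ContDiffAt ℝ 3 f x) (i j k : Fin n) :
    pd i (pd j (pd k f)) x = pd k (pd i (pd j f)) x := by
  have hinner : pd j (pd k f) =ᶠ[𝓝 x] pd k (pd j f) :=
    (hf.eventually (by simp)).mono fun y hy => pd_pd_comm (hy.of_le (by norm_num)) j k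
  rw [pd_congr_of_eventuallyEq i hinner, pd_pd_comm (contDiffAt_pd hf (by norm_num) j)]

lemma contDiffAt_nsq {m k : WithTop ℕ∞} (hf : ContDiffAt ℝ k f x) (hk : m + 1 ≤ k) :
    ContDiffAt ℝ m (nsq f) x :=
  ContDiffAt.sum fun i _ => (contDiffAt_pd hf hk i).pow 2

lemma contDiffAt_lapp {m k : WithTop ℕ∞} (hf : ContDiffAt ℝ k f x) (hk : m + 1 + 1 ≤ k) :
    ContDiffAt ℝ m (lapp f) x :=
  ContDiffAt.sum fun i _ => contDiffAt_pd (contDiffAt_pd hf hk i) le_rfl i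

lemma pd_nsq (hf : ∀ k, DifferentiableAt ℝ (pd k f) x) (j : Fin n) :
    pd j (nsq f) x = 2 * ∑ k, pd k f x * pd j (pd k f) x := by
  unfold nsq
  rw [pd_sum (F := fun k y => pd k f y ^ 2) _ j fun k _ => (hf k).pow 2, Finset.mul_sum]
  exact Finset.sum_congr rfl fun k _ => by rw [pd_sq j (hf k)]; ring

lemma pd_lapp (hf : ContDiffAt ℝ 3 f x) (k : Fin n) :
    pd k (lapp f) x = ∑ i, pd k (pd i (pd i f)) x := by
  unfold lapp
  exact pd_sum _ k fun i _ => differentiableAt_pd (contDiffAt_pd hf (by norm_num) i) le_rfl i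

end Calculus

open Matrix

theorem vecMulVec_add_smul_quadratic_identity {ι R : Type*} [Fintype ι] [CommRing R]
    (A t : ι → R) {H : Matrix ι ι R} (hH : H.IsSymm) (s : R) {M : Matrix ι ι R}
    (hM : M = vecMulVec A t + s • H) :
    2 * (A ⬝ᵥ (M * M) *ᵥ A) - 2 * (A ⬝ᵥ M *ᵥ A) * M.trace
      = 2 * s * (A ⬝ᵥ A) * (t ⬝ᵥ H *ᵥ A - H.trace * (t ⬝ᵥ A))
        + 2 * s ^ 2 * (H *ᵥ A ⬝ᵥ H *ᵥ A - H.trace * (A ⬝ᵥ H *ᵥ A)) := by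
  have hsymm : ∀ w, A ⬝ᵥ H *ᵥ w = H *ᵥ A ⬝ᵥ w := fun w => by
    rw [dotProduct_mulVec, ← mulVec_transpose, hH.eq]
  subst hM
  simp only [← mulVec_mulVec, add_mulVec, smul_mulVec, vecMulVec_mulVec, op_smul_eq_smul,
    dotProduct_add, dotProduct_smul, mulVec_add, mulVec_smul, trace_add, trace_smul,
    trace_vecMulVec, smul_eq_mul, hsymm]
  simp only [dotProduct_comm A t, dotProduct_comm (H *ᵥ A) A]
  ring

theorem sum_vecMulVec_add_smul_quadratic_identity {ι R : Type*} [Fintype ι] [CommRing R]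
    (A t : ι → R) {H : Matrix ι ι R} (hH : H.IsSymm) (s : R) {M : ι → ι → R}
    (hM : ∀ i j, M i j = A i * t j + s * H i j) :
    2 * (∑ i, ∑ l, ∑ j, A i * M i l * M l j * A j) - 2 * (∑ i, ∑ j, A i * M i j * A j) * ∑ i, M i i
      = 2 * s * (A ⬝ᵥ A) * (t ⬝ᵥ H *ᵥ A - H.trace * (t ⬝ᵥ A))
        + 2 * s ^ 2 * (H *ᵥ A ⬝ᵥ H *ᵥ A - H.trace * (A ⬝ᵥ H *ᵥ A)) := by
  have hM' : of M = vecMulVec A t + s • H := ext fun i j => by simp [hM, vecMulVec_apply]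
  rw [← vecMulVec_add_smul_quadratic_identity A t hH s hM']
  simp only [dotProduct, mulVec, mul_apply, trace, diag, of_apply, Finset.mul_sum, Finset.sum_mul,
    mul_assoc]
  congr 1
  exact Finset.sum_congr rfl fun _ _ => Finset.sum_comm

section VectorCalculus

variable {n : ℕ} {f g : (Fin n → ℝ) → ℝ} {F G : (Fin n → ℝ) → (Fin n → ℝ)} {x : Fin n → ℝ}

noncomputable def hess (f : (Fin n → ℝ) → ℝ) (x : Fin n → ℝ) : Matrix (Fin n) (Fin n) ℝ :=
  of fun i j => pd i (pd j f) x

lemma hess_isSymm (hf : ContDiffAt ℝ 2 f x) : (hess f x).IsSymm :=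
  ext fun i j => pd_pd_comm hf j i

lemma lapp_eq_trace_hess : lapp f x = (hess f x).trace := rfl

lemma nsq_eq_dotProduct : nsq f x = gradv f x ⬝ᵥ gradv f x := by
  simp only [nsq, dotProduct, gradv, sq]

lemma differentiableAt_gradv {k : WithTop ℕ∞} (hf : ContDiffAt ℝ k f x) (hk : 2 ≤ k) :
    DifferentiableAt ℝ (gradv f) x :=
  differentiableAt_pi.2 (differentiableAt_pd hf hk)

lemma gradv_mul (hf : DifferentiableAt ℝ f x) (hg : DifferentiableAt ℝ g x) :
    gradv (fun y => f y * g y) x = g x • gradv f x + f x • gradv g x := by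
  ext i
  simp only [gradv, pd_mul i hf hg, Pi.add_apply, Pi.smul_apply, smul_eq_mul]
  ring

lemma gradv_sq (hf : DifferentiableAt ℝ f x) :
    gradv (fun y => f y ^ 2) x = (2 * f x) • gradv f x := by
  ext i
  simp only [gradv, pd_sq i hf, Pi.smul_apply, smul_eq_mul]

lemma gradv_nsq (hf : ∀ k, DifferentiableAt ℝ (pd k f) x) :
    gradv (nsq f) x = (2 : ℝ) • hess f x *ᵥ gradv f x := by
  ext j
  simp only [gradv, pd_nsq hf, Pi.smul_apply, smul_eq_mul, mulVec, dotProduct, hess, of_apply]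
  simp only [mul_comm]

lemma lapp_nsq (hf : ContDiffAt ℝ 3 f x) :
    lapp (nsq f) x
      = 2 * ((∑ i, ∑ j, pd i (pd j f) x ^ 2) + gradv f x ⬝ᵥ gradv (lapp f) x) := by
  have hQ : ∀ i, pd i (nsq f) =ᶠ[𝓝 x] fun y => 2 * ∑ k, pd k f y * pd i (pd k f) y :=
    fun i => (hf.eventually (by simp)).mono fun y hy =>
      pd_nsq (differentiableAt_pd hy (by norm_num)) i
  have hterm : ∀ i, pd i (pd i (nsq f)) x
      = 2 * ∑ k, (pd i (pd k f) x ^ 2 + pd k f x * pd k (pd i (pd i f)) x) := by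
    intro i
    have hd1 : ∀ k, DifferentiableAt ℝ (pd k f) x := differentiableAt_pd hf (by norm_num)
    have hd2 : ∀ k, DifferentiableAt ℝ (pd i (pd k f)) x :=
      fun k => differentiableAt_pd (contDiffAt_pd hf (by norm_num) k) le_rfl i
    rw [pd_congr_of_eventuallyEq i (hQ i),
      pd_const_mul (f := fun y => ∑ k, pd k f y * pd i (pd k f) y) _ _
        (DifferentiableAt.fun_sum fun k _ => (hd1 k).mul (hd2 k)),
      pd_sum (F := fun k y => pd k f y * pd i (pd k f) y) _ _ fun k _ => (hd1 k).mul (hd2 k)]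
    congr 1
    refine Finset.sum_congr rfl fun k _ => ?_
    rw [pd_mul i (hd1 k) (hd2 k), pd_pd_pd_comm hf]
    ring
  have hsum : gradv f x ⬝ᵥ gradv (lapp f) x = ∑ i, ∑ k, pd k f x * pd k (pd i (pd i f)) x := by
    simp only [dotProduct, gradv, pd_lapp hf, Finset.mul_sum]
    exact Finset.sum_comm
  simp only [lapp, hterm, hsum, mul_add, Finset.mul_sum, Finset.sum_add_distrib]

lemma vdiv_gradv : vdiv (gradv f) x = lapp f x := rfl

lemma vdiv_sub (hF : DifferentiableAt ℝ F x) (hG : DifferentiableAt ℝ G x) :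
    vdiv (fun y => F y - G y) x = vdiv F x - vdiv G x := by
  simp only [vdiv, Pi.sub_apply, ← Finset.sum_sub_distrib]
  exact Finset.sum_congr rfl fun i _ =>
    pd_sub i (differentiableAt_pi.1 hF i) (differentiableAt_pi.1 hG i)

lemma vdiv_const_smul (c : ℝ) (hF : DifferentiableAt ℝ F x) :
    vdiv (fun y => c • F y) x = c * vdiv F x := by
  simp only [vdiv, Pi.smul_apply, smul_eq_mul, Finset.mul_sum]
  exact Finset.sum_congr rfl fun i _ => pd_const_mul i c (differentiableAt_pi.1 hF i)

lemma vdiv_smul (hg : DifferentiableAt ℝ g x) (hF : DifferentiableAt ℝ F x) :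
    vdiv (fun y => g y • F y) x = gradv g x ⬝ᵥ F x + g x * vdiv F x := by
  simp only [vdiv, Pi.smul_apply, smul_eq_mul, dotProduct, gradv, Finset.mul_sum,
    ← Finset.sum_add_distrib]
  exact Finset.sum_congr rfl fun i _ => pd_mul i hg (differentiableAt_pi.1 hF i)

lemma vdiv_half_nsq_smul_gradv_nsq_sub (hf : ContDiffAt ℝ 3 f x) :
    vdiv (fun y => (1 / 2 : ℝ) • (nsq f y • gradv (nsq f) y) - (nsq f y * lapp f y) • gradv f y) x
      = 2 * (hess f x *ᵥ gradv f x ⬝ᵥ hess f x *ᵥ gradv f x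
          - lapp f x * (gradv f x ⬝ᵥ hess f x *ᵥ gradv f x))
        + nsq f x * (∑ i, ∑ j, pd i (pd j f) x ^ 2 - lapp f x ^ 2) := by
  have hQ : ContDiffAt ℝ 2 (nsq f) x := contDiffAt_nsq hf (by norm_num)
  have hQd : DifferentiableAt ℝ (nsq f) x := hQ.differentiableAt (by simp)
  have hΛd : DifferentiableAt ℝ (lapp f) x :=
    (contDiffAt_lapp (m := 1) hf (by norm_num)).differentiableAt one_ne_zero
  have hgradQ := differentiableAt_gradv hQ le_rfl
  have hgradf := differentiableAt_gradv hf (by norm_num)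
  rw [vdiv_sub (F := fun y => (1 / 2 : ℝ) • (nsq f y • gradv (nsq f) y))
      (G := fun y => (nsq f y * lapp f y) • gradv f y)
      ((hQd.fun_smul hgradQ).fun_const_smul _) ((hQd.fun_mul hΛd).fun_smul hgradf),
    vdiv_const_smul _ (hQd.fun_smul hgradQ), vdiv_smul hQd hgradQ,
    vdiv_smul (hQd.fun_mul hΛd) hgradf,
    vdiv_gradv, vdiv_gradv, lapp_nsq hf, gradv_mul hQd hΛd,
    gradv_nsq (differentiableAt_pd hf (by norm_num))]
  simp only [add_dotProduct, smul_dotProduct, dotProduct_smul, smul_eq_mul,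
    dotProduct_comm (gradv (lapp f) x),
    dotProduct_comm (hess f x *ᵥ gradv f x) (gradv f x)]
  ring

lemma differentiableAt_half_nsq_smul_gradv_nsq_sub (hf : ContDiffAt ℝ 3 f x) :
    DifferentiableAt ℝ (fun y =>
      (1 / 2 : ℝ) • (nsq f y • gradv (nsq f) y) - (nsq f y * lapp f y) • gradv f y) x := by
  have hQd : DifferentiableAt ℝ (nsq f) x :=
    (contDiffAt_nsq (m := 1) hf (by norm_num)).differentiableAt one_ne_zero
  have hΛd : DifferentiableAt ℝ (lapp f) x :=
    (contDiffAt_lapp (m := 1) hf (by norm_num)).differentiableAt one_ne_zero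
  have hgradQ := differentiableAt_gradv (contDiffAt_nsq (m := 2) hf (by norm_num)) le_rfl
  have hgradf := differentiableAt_gradv hf (by norm_num)
  fun_prop

lemma pd_smul_gradv_apply (hg : DifferentiableAt ℝ g x) (hf : ContDiffAt ℝ 2 f x) (i l : Fin n) :
    pd l (fun y => (g y • gradv f y) i) x = gradv f x i * gradv g x l + g x * hess f x i l := by
  simp only [Pi.smul_apply, smul_eq_mul, gradv, hess, of_apply]
  rw [pd_mul l hg (differentiableAt_pd hf le_rfl i), pd_pd_comm hf]
  ring

end VectorCalculus

/-- For `v ∈ C³(Ω)`, `ξ ∈ C¹(Ω)` and `Φ := ξ ∇v`, on `Ω` one has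
`2 ∇v·(DΦ)²∇v − 2 (∇v·DΦ∇v) div Φ
  = div[ ξ² ( ½ |∇v|² ∇(|∇v|²) − |∇v|² Δv ∇v ) ] + |∇v|² ((Δv)² − |D²v|²) ξ²`. -/
theorem third_term_identity {n : ℕ} (Ω : Set (Fin n → ℝ)) (hΩ : IsOpen Ω)
    (v ξ : (Fin n → ℝ) → ℝ) (hv : ContDiffOn ℝ 3 v Ω) (hξ : ContDiffOn ℝ 1 ξ Ω)
    (Φ : (Fin n → ℝ) → (Fin n → ℝ)) (hΦ : Φ = fun x => ξ x • gradv v x) :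
    ∀ x ∈ Ω,
      2 * (∑ i : Fin n, ∑ l : Fin n, ∑ j : Fin n,
            pd i v x * pd l (fun y => Φ y i) x * pd j (fun y => Φ y l) x * pd j v x)
        - 2 * (∑ i : Fin n, ∑ j : Fin n,
            pd i v x * pd j (fun y => Φ y i) x * pd j v x) * vdiv Φ x
      = vdiv (fun y => (ξ y) ^ 2 •
            ((1 / 2 : ℝ) • (nsq v y • gradv (nsq v) y)
              - (nsq v y * lapp v y) • gradv v y)) x
        + nsq v x * ((lapp v x) ^ 2
            - ∑ i : Fin n, ∑ j : Fin n, (pd i (fun y => pd j v y) x) ^ 2) * (ξ x) ^ 2 := by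
  intro x hx
  have hv3 : ContDiffAt ℝ 3 v x := hv.contDiffAt (hΩ.mem_nhds hx)
  have hv2 : ContDiffAt ℝ 2 v x := hv3.of_le (by norm_num)
  have hξx : DifferentiableAt ℝ ξ x :=
    (hξ.contDiffAt (hΩ.mem_nhds hx)).differentiableAt one_ne_zero
  have hDΦ : ∀ i l, pd l (fun y => Φ y i) x
      = gradv v x i * gradv ξ x l + ξ x * hess v x i l := by
    subst hΦ
    exact pd_smul_gradv_apply hξx hv2
  refine (sum_vecMulVec_add_smul_quadratic_identity (gradv v x) (gradv ξ x) (hess_isSymm hv2) (ξ x)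
    hDΦ).trans ?_
  rw [vdiv_smul (hξx.fun_pow 2) (differentiableAt_half_nsq_smul_gradv_nsq_sub hv3), gradv_sq hξx,
    vdiv_half_nsq_smul_gradv_nsq_sub hv3, gradv_nsq (differentiableAt_pd hv2 le_rfl),
    nsq_eq_dotProduct, lapp_eq_trace_hess]
  simp only [dotProduct_sub, dotProduct_smul, smul_dotProduct, smul_eq_mul]
  ring
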